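/- Let 0 → M_0 →(i) M →(p) M_1 → 0 be an admissible exact sequence in A, and assume every object of A is Noetherian (satisfies the ascending chain condition on subobjects). Then for each subobject N_0' ⊆ M_0 there exists a universal extension: a subobject N' ⊆ M with N' ∩ M_0 = N_0' such that every subobject of M whose intersection with M_0 is N_0' is contained in N'. Moreover, universal extensions are closed under intersections: if N' and N'' are the universal extensions of N_0' and N_0'' respectively, then N' ∩ N'' is the universal extension of N_0' ∩ N_0''. -/

import Mathlib

set_option maxHeartbeats 1000000
set_option synthInstance.maxHeartbeats 400000

open CategoryTheory CategoryTheory.Limits ZeroObject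

universe v u

attribute [local instance] CategoryTheory.Abelian.hasFiniteBiproducts

variable {A : Type u} [Category.{v} A] [Abelian A] [CategoryTheory.Linear ℚ A]

/-- An Abelian subcategory of `A`: a class of objects containing `0` and closed under
subobjects, quotients and finite direct sums (so that the corresponding full subcategory
is Abelian and the inclusion is exact). -/
structure AbelianSubcat (A : Type u) [Category.{v} A] [Abelian A]
    [CategoryTheory.Linear ℚ A] where
  P : A → Prop
  zero_mem : P 0
  mem_of_mono : ∀ {X Y : A} (f : X ⟶ Y), Mono f → P Y → P X
  mem_of_epi : ∀ {X Y : A} (f : X ⟶ Y), Epi f → P X → P Y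
  mem_biprod : ∀ {X Y : A}, P X → P Y → P (X ⊞ Y)

/-- The two subcategories are orthogonal: `Hom(A_0, A_1) = Hom(A_1, A_0) = 0`. -/
def OrthogonalPair (A0 A1 : AbelianSubcat A) : Prop :=
  (∀ {X Y : A}, A0.P X → A1.P Y → ∀ f : X ⟶ Y, f = 0) ∧
  (∀ {X Y : A}, A1.P X → A0.P Y → ∀ f : X ⟶ Y, f = 0)

/-- An admissible exact sequence `0 → M_0 → M → M_1 → 0` with `M_0 ∈ A_0`, `M_1 ∈ A_1`. -/
structure AdmissibleSeq (A0 A1 : AbelianSubcat A) (M0 M M1 : A)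
    (i : M0 ⟶ M) (p : M ⟶ M1) : Prop where
  zero : i ≫ p = 0
  shortExact : (ShortComplex.mk i p zero).ShortExact
  mem0 : A0.P M0
  mem1 : A1.P M1

/-- The image `p(N)` of a subobject `N ⊆ X` under a morphism `p : X ⟶ Y`. -/
noncomputable def subImg {X Y : A} (p : X ⟶ Y) (N : Subobject X) : Subobject Y :=
  imageSubobject (N.arrow ≫ p)

/-- `N` is the universal lift of the subobject `N₁ ⊆ M_1` along `p : M ↠ M_1`:
`p(N) = N₁`, and every subobject of `M` whose image under `p` is `N₁` contains `N`. -/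
def IsUnivLift {X Y : A} (p : X ⟶ Y) (N1 : Subobject Y) (N : Subobject X) : Prop :=
  subImg p N = N1 ∧ ∀ N' : Subobject X, subImg p N' = N1 → N ≤ N'

/-- `N` is the universal extension of the subobject `N₀ ⊆ M₀sub` (`M₀sub ⊆ M` a given
subobject): `N ∩ M₀sub = N₀`, and every subobject of `M` whose intersection with
`M₀sub` is `N₀` is contained in `N`. -/
def IsUnivExt {X : A} (M0sub : Subobject X) (N0 : Subobject X) (N : Subobject X) : Prop :=
  N ⊓ M0sub = N0 ∧ ∀ N' : Subobject X, N' ⊓ M0sub = N0 → N' ≤ N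

/-- The `m`-th power `M^m` of an object (`M^0 = 0`). -/
noncomputable abbrev pow (M : A) (m : ℕ) : A := ⨁ (fun _ : Fin m => M)

/-- The `n`-th power `f^n : X^n ⟶ Y^n` of a morphism. -/
noncomputable abbrev powMap {X Y : A} (f : X ⟶ Y) (n : ℕ) : pow X n ⟶ pow Y n :=
  biproduct.map (fun _ => f)

/-- The admissible exact sequence `0 → M_0 →i M →p M_1 → 0` is *right saturated* if every
`φ₁ : M_1^n ⟶ M_1^m` has a lift `φ : M^n ⟶ M^m` such that `ker(φ)` is the universal lift
of `ker(φ₁)` along `p^n`. -/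
def RightSaturated {M0 M M1 : A} (i : M0 ⟶ M) (p : M ⟶ M1) : Prop :=
  ∀ (n m : ℕ) (φ1 : pow M1 n ⟶ pow M1 m),
    ∃ φ : pow M n ⟶ pow M m,
      φ ≫ powMap p m = powMap p n ≫ φ1 ∧
      IsUnivLift (powMap p n) (kernelSubobject φ1) (kernelSubobject φ)

/-- The admissible exact sequence `0 → M_0 →i M →p M_1 → 0` is *left saturated* if every
`φ₀ : M_0^n ⟶ M_0^m` has an extension `φ : M^n ⟶ M^m` such that `im(φ)` is the universal
extension of `im(φ₀)` inside `M^m` (relative to the subobject `M_0^m ⊆ M^m`). -/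
def LeftSaturated {M0 M M1 : A} (i : M0 ⟶ M) (p : M ⟶ M1) : Prop :=
  ∀ (n m : ℕ) (φ0 : pow M0 n ⟶ pow M0 m),
    ∃ φ : pow M n ⟶ pow M m,
      powMap i n ≫ φ = φ0 ≫ powMap i m ∧
      IsUnivExt (imageSubobject (powMap i m)) (imageSubobject (φ0 ≫ powMap i m))
        (imageSubobject φ)

/-!
If `N' ⊓ M₀ ≤ N`, then `(N ⊔ N') ⊓ M₀ ≤ N`: the image of `(N ⊔ N') ⊓ M₀` in `M / N` is an object
of `A₀` lying inside the image of `N'`, which is a quotient of `N' / (N' ⊓ M₀) ⊆ M₁` and hence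
an object of `A₁`; by orthogonality it vanishes. So the subobjects meeting `M₀` in `N₀` are closed
under `⊔` with each other, and the Noetherian condition yields a largest one. The same absorption
property shows that a subobject meeting `M₀` inside `N₀ ⊓ N₀'` lies in both `N` and `N'`.
-/

theorem sup_inf_eq_of_inf_le {α : Type*} [Lattice α] {m : α}
    (hm : ∀ N N' : α, N' ⊓ m ≤ N → (N ⊔ N') ⊓ m ≤ N) {N N' : α} (h : N' ⊓ m ≤ N) :
    (N ⊔ N') ⊓ m = N ⊓ m :=
  le_antisymm (le_inf (hm N N' h) inf_le_right) (inf_le_inf_right _ le_sup_left)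

section Abelian

variable {C : Type*} [Category C] [Abelian C]

theorem imageSubobject_epi_comp {X' X Y : C} (e : X' ⟶ X) [Epi e] (f : X ⟶ Y) :
    imageSubobject (e ≫ f) = imageSubobject f := by
  have := isIso_of_mono_of_epi (image.preComp e f)
  exact Subobject.mk_eq_mk_of_comm _ _ (asIso (image.preComp e f)) (image.preComp_ι e f)

theorem imageSubobject_le_iff_comp_cokernel_π {X Y : C} (f : X ⟶ Y) (N : Subobject Y) :
    imageSubobject f ≤ N ↔ f ≫ cokernel.π N.arrow = 0 := by
  refine ⟨fun h => ?_, fun h => imageSubobject_le f _ (Abelian.monoLift_comp _ f h)⟩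
  rw [← imageSubobject_arrow_comp f, ← Subobject.ofLE_arrow h, Category.assoc, Category.assoc,
    cokernel.condition, comp_zero, comp_zero]

theorem Subobject.le_iff_arrow_comp_cokernel_π {Y : C} (N' N : Subobject Y) :
    N' ≤ N ↔ N'.arrow ≫ cokernel.π N.arrow = 0 := by
  rw [← imageSubobject_le_iff_comp_cokernel_π, imageSubobject_mono, Subobject.mk_arrow]

theorem Subobject.exists_obj_eq_subImg {X Y : C} (f : X ⟶ Y) (N : Subobject X) :
    (Subobject.exists f).obj N = subImg f N :=
  calc (Subobject.exists f).obj N = Subobject.mk (Subobject.imageFactorisation f N).F.m :=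
        (Subobject.mk_arrow _).symm
    _ = subImg f N := Subobject.mk_eq_mk_of_comm _ _
        ((Subobject.imageFactorisation f N).isImage.isoExt (Image.isImage _))
        (IsImage.isoExt_hom_m _ _)

theorem gc_subImg_pullback {X Y : C} (f : X ⟶ Y) :
    GaloisConnection (subImg f) (Subobject.pullback f).obj := fun N T => by
  simpa only [Subobject.exists_obj_eq_subImg] using (Subobject.existsPullbackAdj f).gc N T

theorem subImg_sup_of_arrow_comp_eq_zero {X Y : C} (f : X ⟶ Y) {N N' : Subobject X}
    (h : N.arrow ≫ f = 0) : subImg f (N ⊔ N') = subImg f N' := by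
  have hN : subImg f N = ⊥ := by simp only [subImg, h, imageSubobject_zero]
  rw [(gc_subImg_pullback f).l_sup, hN, bot_sup_eq]

variable {X : C} {m : Subobject X}

theorem IsUnivExt.le_of_inf_le (hm : ∀ N N' : Subobject X, N' ⊓ m ≤ N → (N ⊔ N') ⊓ m ≤ N)
    {K0 K N : Subobject X} (hK : IsUnivExt m K0 K) (h : N ⊓ m ≤ K) : N ≤ K :=
  le_sup_right.trans (hK.2 _ ((sup_inf_eq_of_inf_le hm h).trans hK.1))

theorem exists_isUnivExt [WellFoundedGT (Subobject X)]
    (hm : ∀ N N' : Subobject X, N' ⊓ m ≤ N → (N ⊔ N') ⊓ m ≤ N) {N0 : Subobject X}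
    (hN0 : N0 ≤ m) : ∃ N, IsUnivExt m N0 N := by
  obtain ⟨N, hN, hmax⟩ :=
    wellFounded_gt.has_min {N : Subobject X | N ⊓ m = N0} ⟨N0, inf_eq_left.mpr hN0⟩
  have hN : N ⊓ m = N0 := hN
  refine ⟨N, hN, fun N' hN' => ?_⟩
  have hsup : (N ⊔ N') ⊓ m = N0 := (sup_inf_eq_of_inf_le hm (hN' ▸ hN ▸ inf_le_left)).trans hN
  exact le_sup_right.trans (eq_of_le_of_not_lt le_sup_left (hmax _ hsup)).ge

theorem IsUnivExt.inf (hm : ∀ N N' : Subobject X, N' ⊓ m ≤ N → (N ⊔ N') ⊓ m ≤ N)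
    {N0 N0' N N' : Subobject X} (hN : IsUnivExt m N0 N) (hN' : IsUnivExt m N0' N') :
    IsUnivExt m (N0 ⊓ N0') (N ⊓ N') := by
  refine ⟨by rw [inf_inf_distrib_right, hN.1, hN'.1], fun L hL => le_inf ?_ ?_⟩
  · exact hN.le_of_inf_le hm (hL ▸ inf_le_left.trans (hN.1 ▸ inf_le_left))
  · exact hN'.le_of_inf_le hm (hL ▸ inf_le_right.trans (hN'.1 ▸ inf_le_left))

end Abelian

namespace AbelianSubcat

variable (S : AbelianSubcat A)

theorem mem_imageSubobject {X Y : A} (f : X ⟶ Y) (hX : S.P X) : S.P (imageSubobject f) :=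
  S.mem_of_epi (factorThruImageSubobject f) inferInstance hX

theorem mem_of_le {X : A} {N N' : Subobject X} (h : N ≤ N') (hN' : S.P N') : S.P N :=
  S.mem_of_mono (Subobject.ofLE _ _ h) inferInstance hN'

theorem mem_imageSubobject_of_kernel_ι_comp_eq_zero {X Y Z : A} (h : X ⟶ Y) (g : X ⟶ Z)
    (hY : S.P Y) (hg : kernel.ι h ≫ g = 0) : S.P (imageSubobject g) := by
  rw [← cokernel.π_desc _ g hg, imageSubobject_epi_comp]
  exact S.mem_imageSubobject _ (S.mem_of_mono (Abelian.factorThruCoimage h) inferInstance hY)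

end AbelianSubcat

theorem OrthogonalPair.eq_zero_of_imageSubobject_le {A0 A1 : AbelianSubcat A}
    (horth : OrthogonalPair A0 A1) {X Y : A} {f : X ⟶ Y} {T : Subobject Y} (hX : A0.P X)
    (hT : A1.P T) (h : imageSubobject f ≤ T) : f = 0 := by
  rw [← imageSubobject_arrow_comp f, ← Subobject.ofLE_arrow h, ← Category.assoc,
    horth.1 hX hT (factorThruImageSubobject f ≫ Subobject.ofLE _ _ h), zero_comp]

namespace AdmissibleSeq

variable {A0 A1 : AbelianSubcat A} {M0 M M1 : A} {i : M0 ⟶ M} {p : M ⟶ M1}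

theorem imageSubobject_eq_kernelSubobject (hadm : AdmissibleSeq A0 A1 M0 M M1 i p) :
    imageSubobject i = kernelSubobject p :=
  (ShortComplex.exact_iff_image_eq_kernel _).1 hadm.shortExact.exact

theorem mem_of_le_imageSubobject (hadm : AdmissibleSeq A0 A1 M0 M M1 i p) {N : Subobject M}
    (h : N ≤ imageSubobject i) : A0.P N :=
  A0.mem_of_le h (A0.mem_imageSubobject i hadm.mem0)

theorem mem_subImg_cokernel_π (hadm : AdmissibleSeq A0 A1 M0 M M1 i p) {N N' : Subobject M}
    (h : N' ⊓ imageSubobject i ≤ N) : A1.P (subImg (cokernel.π N.arrow) N') := by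
  refine A1.mem_imageSubobject_of_kernel_ι_comp_eq_zero (N'.arrow ≫ p) _ hadm.mem1 ?_
  rw [← Category.assoc, ← imageSubobject_le_iff_comp_cokernel_π]
  refine le_trans (le_inf (imageSubobject_le _ (kernel.ι _) rfl) ?_) h
  rw [hadm.imageSubobject_eq_kernelSubobject]
  exact le_kernelSubobject _ _ (imageSubobject_arrow_comp_eq_zero (by simp))

theorem sup_inf_le (hadm : AdmissibleSeq A0 A1 M0 M M1 i p) (horth : OrthogonalPair A0 A1)
    {N N' : Subobject M} (h : N' ⊓ imageSubobject i ≤ N) : (N ⊔ N') ⊓ imageSubobject i ≤ N := by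
  rw [Subobject.le_iff_arrow_comp_cokernel_π]
  refine horth.eq_zero_of_imageSubobject_le (hadm.mem_of_le_imageSubobject inf_le_right)
    (hadm.mem_subImg_cokernel_π h) ?_
  calc subImg (cokernel.π N.arrow) ((N ⊔ N') ⊓ imageSubobject i)
      ≤ subImg (cokernel.π N.arrow) (N ⊔ N') := (gc_subImg_pullback _).monotone_l inf_le_left
    _ = subImg (cokernel.π N.arrow) N' := subImg_sup_of_arrow_comp_eq_zero _ (cokernel.condition _)

end AdmissibleSeq

/-- **Lemma (`LEMMAUNIVERSAL` 2).** Let `0 → M_0 →i M →p M_1 → 0` be an admissible exact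
sequence and assume every object of `A` is Noetherian (ACC on subobjects). Then every
subobject `N₀` of `M_0` (viewed as a subobject of `M` contained in `M_0 ⊆ M`) admits a
universal extension `N ⊆ M` (with `N ∩ M_0 = N₀`, containing every subobject with this
property); moreover universal extensions are closed under intersections. -/
theorem exists_universal_extension (A0 A1 : AbelianSubcat A) (horth : OrthogonalPair A0 A1)
    (M0 M M1 : A) (i : M0 ⟶ M) (p : M ⟶ M1) (hadm : AdmissibleSeq A0 A1 M0 M M1 i p)
    (hnoeth : ∀ X : A, WellFoundedGT (Subobject X)) :
    (∀ N0 : Subobject M, N0 ≤ imageSubobject i →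
      ∃ N : Subobject M, IsUnivExt (imageSubobject i) N0 N) ∧
    (∀ (N0 N0' : Subobject M) (N N' : Subobject M),
      IsUnivExt (imageSubobject i) N0 N → IsUnivExt (imageSubobject i) N0' N' →
      IsUnivExt (imageSubobject i) (N0 ⊓ N0') (N ⊓ N')) := by
  have hm := fun N N' (h : N' ⊓ imageSubobject i ≤ N) => hadm.sup_inf_le horth h
  have := hnoeth M
  exact ⟨fun _ hN0 => exists_isUnivExt hm hN0, fun _ _ _ _ hN hN' => hN.inf hm hN'⟩
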